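/- For binary potential outcomes (without any monotonicity assumption), the variance of the difference-in-means estimator τ̂(T) = n₁₁(T)/N₁ − n₀₁(T)/N₀ over the uniform distribution on subsets T of size N₁ equals (N/(N−1))·{ p₁(1−p₁)/N₁ + p₀(1−p₀)/N₀ − τ(1−τ)/N − 2N₀₁/N² }. -/

import Mathlib

/-!
Up to an additive constant, `τ̂(T)` is the sample total `∑ i ∈ T, a i` of
`a i = Y₁ i / N₁ + Y₀ i / N₀`. A unit lies in `T` with probability `N₁ / N` and two distinct
units with probability `N₁ (N₁ - 1) / (N (N - 1))`, which gives the variance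
`N₁ N₀ / (N (N - 1)) · (∑ a² - (∑ a)² / N)` of a sample total drawn without replacement, and hence
Neyman's formula `S₁² / N₁ + S₀² / N₀ - S_τ² / N`. For binary outcomes the population variances are
`p₁ (1 - p₁)`, `p₀ (1 - p₀)` and, since `(Y₁ - Y₀)²` counts the units of types `10` and `01`,
`τ (1 - τ) + 2 N₀₁ / N`.
-/

/-- Expectation of a real-valued statistic `f` of the treatment group `T`,
where `T` is a uniformly random subset of `{1,…,N}` of size `N₁`. -/
noncomputable def expE (N N₁ : ℕ) (f : Finset (Fin N) → ℝ) : ℝ :=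
  (∑ T ∈ Finset.powersetCard N₁ (Finset.univ : Finset (Fin N)), f T) /
    ((Finset.powersetCard N₁ (Finset.univ : Finset (Fin N))).card : ℝ)

/-- Variance of a real-valued statistic `f` over uniformly random subsets of size `N₁`. -/
noncomputable def varE (N N₁ : ℕ) (f : Finset (Fin N) → ℝ) : ℝ :=
  expE N N₁ (fun T => (f T - expE N N₁ f) ^ 2)

open Finset

theorem card_filter_powersetCard_subset_mul_choose {α : Type*} [DecidableEq α]
    {s A : Finset α} (hA : A ⊆ s) (k : ℕ) :
    #((s.powersetCard k).filter (A ⊆ ·)) * (#s).choose #A = (#s).choose k * k.choose #A := by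
  rcases le_or_gt #A k with hAk | hkA
  · rw [card_filter_powersetCard_subset A s k hA hAk, Nat.choose_mul hAk, mul_comm]
  · have hempty : (s.powersetCard k).filter (A ⊆ ·) = ∅ :=
      filter_eq_empty_iff.2 fun T hT hAT =>
        (card_le_card hAT).not_gt ((mem_powersetCard.1 hT).2 ▸ hkA)
    rw [hempty, Nat.choose_eq_zero_of_lt hkA, card_empty, zero_mul, mul_zero]

section Expectation

variable {N k : ℕ}

theorem expE_add (f g : Finset (Fin N) → ℝ) :
    expE N k (fun T => f T + g T) = expE N k f + expE N k g := by
  simp only [expE, sum_add_distrib, add_div]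

theorem expE_const_mul (c : ℝ) (f : Finset (Fin N) → ℝ) :
    expE N k (fun T => c * f T) = c * expE N k f := by
  simp only [expE, ← mul_sum, mul_div_assoc]

theorem expE_sum {ι : Type*} (s : Finset ι) (f : ι → Finset (Fin N) → ℝ) :
    expE N k (fun T => ∑ i ∈ s, f i T) = ∑ i ∈ s, expE N k (f i) := by
  simp only [expE, sum_comm (s := powersetCard _ _), sum_div]

theorem cast_card_powersetCard_ne_zero (hk : k ≤ N) :
    ((powersetCard k (univ : Finset (Fin N))).card : ℝ) ≠ 0 := by
  rw [card_powersetCard, card_univ, Fintype.card_fin]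
  exact_mod_cast (Nat.choose_pos hk).ne'

theorem expE_const (hk : k ≤ N) (c : ℝ) : expE N k (fun _ => c) = c := by
  rw [expE, sum_const, nsmul_eq_mul, mul_div_cancel_left₀ c (cast_card_powersetCard_ne_zero hk)]

theorem expE_ite_subset (hk : k ≤ N) (A : Finset (Fin N)) :
    expE N k (fun T => if A ⊆ T then 1 else 0) = k.choose #A / N.choose #A := by
  have hA : #A ≤ N := (card_le_univ A).trans_eq (Fintype.card_fin N)
  have hcount := card_filter_powersetCard_subset_mul_choose (subset_univ A) k
  rw [card_univ, Fintype.card_fin] at hcount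
  rw [expE, sum_boole, card_powersetCard, card_univ, Fintype.card_fin,
    div_eq_div_iff (by exact_mod_cast (Nat.choose_pos hk).ne')
      (by exact_mod_cast (Nat.choose_pos hA).ne')]
  exact_mod_cast hcount.trans (mul_comm _ _)

theorem expE_ite_mem (hk : k ≤ N) (i : Fin N) :
    expE N k (fun T => if i ∈ T then 1 else 0) = k / N := by
  simpa using expE_ite_subset hk {i}

theorem expE_ite_mem_and_mem (hk : k ≤ N) {i j : Fin N} (hij : i ≠ j) :
    expE N k (fun T => if i ∈ T ∧ j ∈ T then 1 else 0) = k * (k - 1) / (N * (N - 1)) := by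
  have h := expE_ite_subset hk {i, j}
  rw [card_pair hij, Nat.cast_choose_two, Nat.cast_choose_two] at h
  simp only [insert_subset_iff, singleton_subset_iff] at h
  rw [h]
  field_simp

theorem sum_mem_eq_sum_mul_ite (T : Finset (Fin N)) (g : Fin N → ℝ) :
    ∑ i ∈ T, g i = ∑ i, g i * if i ∈ T then 1 else 0 := by
  simp

theorem expE_sum_mem (hk : k ≤ N) (g : Fin N → ℝ) :
    expE N k (fun T => ∑ i ∈ T, g i) = k / N * ∑ i, g i := by
  rw [funext fun T => sum_mem_eq_sum_mul_ite T g, expE_sum, mul_sum]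
  exact sum_congr rfl fun i _ => by rw [expE_const_mul, expE_ite_mem hk, mul_comm]

theorem expE_sq_sum_mem (hk : k ≤ N) (g : Fin N → ℝ) :
    expE N k (fun T => (∑ i ∈ T, g i) ^ 2) =
      k * (k - 1) / (N * (N - 1)) * (∑ i, g i) ^ 2
        + (k / N - k * (k - 1) / (N * (N - 1))) * ∑ i, g i ^ 2 := by
  set ρ₁ : ℝ := k / N
  set ρ₂ : ℝ := k * (k - 1) / (N * (N - 1))
  have hpair : ∀ i j : Fin N,
      expE N k (fun T => (if i ∈ T then 1 else 0) * (if j ∈ T then 1 else 0))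
        = ρ₂ + if i = j then ρ₁ - ρ₂ else 0 := by
    intro i j
    simp only [ite_zero_mul_ite_zero, mul_one]
    obtain rfl | hij := eq_or_ne i j
    · simp only [and_self, expE_ite_mem hk, if_true]
      ring
    · rw [expE_ite_mem_and_mem hk hij, if_neg hij, add_zero]
  have hexpand : ∀ T : Finset (Fin N), (∑ i ∈ T, g i) ^ 2 =
      ∑ i, ∑ j, g i * g j * ((if i ∈ T then 1 else 0) * (if j ∈ T then 1 else 0)) := by
    intro T
    rw [sum_mem_eq_sum_mul_ite, sq, sum_mul_sum]
    exact sum_congr rfl fun i _ => sum_congr rfl fun j _ => by ring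
  rw [funext hexpand, expE_sum]
  simp only [expE_sum, expE_const_mul, hpair]
  simp only [mul_add, sum_add_distrib, mul_ite, mul_zero, sum_ite_eq, mem_univ, if_true,
    ← sum_mul, ← sum_mul_sum, sq]
  ring

theorem varE_eq_expE_sq_sub (hk : k ≤ N) (f : Finset (Fin N) → ℝ) :
    varE N k f = expE N k (fun T => f T ^ 2) - expE N k f ^ 2 := by
  have hsq : ∀ T, (f T - expE N k f) ^ 2
      = f T ^ 2 + (-2 * expE N k f) * f T + expE N k f ^ 2 := fun T => by ring
  rw [varE, funext hsq, expE_add, expE_add, expE_const_mul, expE_const hk]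
  ring

theorem varE_sub_const (hk : k ≤ N) (f : Finset (Fin N) → ℝ) (c : ℝ) :
    varE N k (fun T => f T - c) = varE N k f := by
  have hmean : expE N k (fun T => f T - c) = expE N k f - c := by
    simp only [sub_eq_add_neg, expE_add, expE_const hk]
  simp only [varE, hmean, sub_sub_sub_cancel_right]

theorem varE_sum_mem (hN : 2 ≤ N) (hk : k ≤ N) (g : Fin N → ℝ) :
    varE N k (fun T => ∑ i ∈ T, g i) =
      k * (N - k) / (N * (N - 1)) * (∑ i, g i ^ 2 - (∑ i, g i) ^ 2 / N) := by
  have hN0 : (N : ℝ) ≠ 0 := Nat.cast_ne_zero.2 (by omega)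
  have hN1 : (N : ℝ) - 1 ≠ 0 := by
    rw [sub_ne_zero]
    exact_mod_cast (show N ≠ 1 by omega)
  rw [varE_eq_expE_sq_sub hk, expE_sq_sum_mem hk, expE_sum_mem hk]
  field_simp
  ring

end Expectation

/-- Population variance with divisor `N`; Neyman's `S²` is `N / (N - 1)` times it, which is where
the factor `N / (N - 1)` of the theorem comes from. -/
noncomputable def popVar {ι : Type*} [Fintype ι] (y : ι → ℝ) : ℝ :=
  (∑ i, y i ^ 2) / Fintype.card ι - ((∑ i, y i) / Fintype.card ι) ^ 2

theorem varE_diffInMeans {N N₁ N₀ : ℕ} (hN₁ : N₁ ≠ 0) (hN₀ : N₀ ≠ 0) (hN : N₁ + N₀ = N)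
    (y1 y0 : Fin N → ℝ) :
    varE N N₁ (fun T => (∑ i ∈ T, y1 i) / N₁ - (∑ i ∈ Tᶜ, y0 i) / N₀)
      = N / (N - 1) * (popVar y1 / N₁ + popVar y0 / N₀ - popVar (y1 - y0) / N) := by
  have hstat : ∀ T : Finset (Fin N), (∑ i ∈ T, y1 i) / N₁ - (∑ i ∈ Tᶜ, y0 i) / N₀
      = ∑ i ∈ T, (y1 i / N₁ + y0 i / N₀) - (∑ i, y0 i) / N₀ := by
    intro T
    rw [← sum_compl_add_sum T y0, sum_add_distrib, ← sum_div, ← sum_div]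
    ring
  have hNR : (N : ℝ) = N₁ + N₀ := by exact_mod_cast hN.symm
  rw [funext hstat, varE_sub_const (by omega), varE_sum_mem (by omega) (by omega)]
  have hsq_add : ∀ i, (y1 i / N₁ + y0 i / N₀) ^ 2
      = y1 i ^ 2 / N₁ ^ 2 + y0 i ^ 2 / N₀ ^ 2 + 2 / (N₁ * N₀) * (y1 i * y0 i) := fun i => by ring
  have hsq_sub : ∀ i, (y1 i - y0 i) ^ 2 = y1 i ^ 2 + y0 i ^ 2 - 2 * (y1 i * y0 i) :=
    fun i => by ring
  simp only [popVar, Fintype.card_fin, Pi.sub_apply, hsq_add, hsq_sub, sum_add_distrib,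
    sum_sub_distrib, ← sum_div, ← mul_sum]
  have hN₁R : (N₁ : ℝ) ≠ 0 := Nat.cast_ne_zero.2 hN₁
  have hN₀R : (N₀ : ℝ) ≠ 0 := Nat.cast_ne_zero.2 hN₀
  have hN1 : (N₁ : ℝ) + N₀ - 1 ≠ 0 := by
    rw [sub_ne_zero]
    exact_mod_cast (show N₁ + N₀ ≠ 1 by omega)
  rw [hNR]
  field_simp
  ring

theorem popVar_of_sq_eq_self {ι : Type*} [Fintype ι] {y : ι → ℝ} (hy : ∀ i, y i ^ 2 = y i) :
    popVar y = (∑ i, y i) / Fintype.card ι * (1 - (∑ i, y i) / Fintype.card ι) := by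
  simp only [popVar, hy]
  ring

theorem natCast_sq_of_le_one {n : ℕ} (h : n ≤ 1) : (n : ℝ) ^ 2 = n := by
  interval_cases n <;> norm_num

theorem natCast_card_filter_eq_one_eq_sum {α : Type*} {Y : α → ℕ} (hY : ∀ i, Y i ≤ 1)
    (s : Finset α) :
    (#(s.filter fun i => Y i = 1) : ℝ) = ∑ i ∈ s, (Y i : ℝ) := by
  rw [natCast_card_filter]
  refine sum_congr rfl fun i _ => ?_
  rcases Nat.le_one_iff_eq_zero_or_eq_one.1 (hY i) with h | h <;> simp [h]

theorem sum_binary_pair_eq_sum_types {α : Type*} [Fintype α] {Y1 Y0 : α → ℕ}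
    (hY1 : ∀ i, Y1 i ≤ 1) (hY0 : ∀ i, Y0 i ≤ 1) (f : ℕ → ℕ → ℝ) :
    ∑ i, f (Y1 i) (Y0 i) =
      f 1 1 * #(univ.filter fun i => Y1 i = 1 ∧ Y0 i = 1)
        + f 1 0 * #(univ.filter fun i => Y1 i = 1 ∧ Y0 i = 0)
        + f 0 1 * #(univ.filter fun i => Y1 i = 0 ∧ Y0 i = 1)
        + f 0 0 * #(univ.filter fun i => Y1 i = 0 ∧ Y0 i = 0) := by
  have hunit : ∀ i, f (Y1 i) (Y0 i) =
      f 1 1 * (if Y1 i = 1 ∧ Y0 i = 1 then 1 else 0)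
        + f 1 0 * (if Y1 i = 1 ∧ Y0 i = 0 then 1 else 0)
        + f 0 1 * (if Y1 i = 0 ∧ Y0 i = 1 then 1 else 0)
        + f 0 0 * (if Y1 i = 0 ∧ Y0 i = 0 then 1 else 0) := by
    intro i
    rcases Nat.le_one_iff_eq_zero_or_eq_one.1 (hY1 i) with h1 | h1 <;>
      rcases Nat.le_one_iff_eq_zero_or_eq_one.1 (hY0 i) with h0 | h0 <;> simp [h1, h0]
  simp only [hunit, sum_add_distrib, ← mul_sum, natCast_card_filter]

theorem stmt_10_general (N N₁ N₀ : ℕ) (hN₁ : 1 ≤ N₁) (hN₁' : N₁ ≤ N - 1)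
    (hN₀ : N₀ = N - N₁)
    (Y1 Y0 : Fin N → ℕ) (hY1 : ∀ i, Y1 i ≤ 1) (hY0 : ∀ i, Y0 i ≤ 1)
    (N11 N10 N01 : ℕ)
    (hN11 : N11 = (Finset.univ.filter (fun i => Y1 i = 1 ∧ Y0 i = 1)).card)
    (hN10 : N10 = (Finset.univ.filter (fun i => Y1 i = 1 ∧ Y0 i = 0)).card)
    (hN01 : N01 = (Finset.univ.filter (fun i => Y1 i = 0 ∧ Y0 i = 1)).card)
    (p1 p0 τ : ℝ) (hp1 : p1 = ((N11 : ℝ) + N10) / N) (hp0 : p0 = ((N11 : ℝ) + N01) / N)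
    (hτ : τ = ((N10 : ℝ) - N01) / N)
    (n11 n01 : Finset (Fin N) → ℕ)
    (hn11 : ∀ T, n11 T = (T.filter (fun i => Y1 i = 1)).card)
    (hn01 : ∀ T, n01 T = (Tᶜ.filter (fun i => Y0 i = 1)).card) :
    varE N N₁ (fun T => (n11 T : ℝ) / N₁ - (n01 T : ℝ) / N₀)
      = (N : ℝ) / (N - 1) *
        (p1 * (1 - p1) / N₁ + p0 * (1 - p0) / N₀ - τ * (1 - τ) / N
          - 2 * N01 / (N : ℝ) ^ 2) := by
  have hstat : (fun T => (n11 T : ℝ) / N₁ - (n01 T : ℝ) / N₀)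
      = fun T => (∑ i ∈ T, (Y1 i : ℝ)) / N₁ - (∑ i ∈ Tᶜ, (Y0 i : ℝ)) / N₀ := by
    funext T
    rw [hn11, hn01, natCast_card_filter_eq_one_eq_sum hY1,
      natCast_card_filter_eq_one_eq_sum hY0]
  have htypes := sum_binary_pair_eq_sum_types hY1 hY0
  simp only [← hN11, ← hN10, ← hN01] at htypes
  have hS1 : ∑ i, (Y1 i : ℝ) = N11 + N10 := by simpa using htypes fun u _ => u
  have hS0 : ∑ i, (Y0 i : ℝ) = N11 + N01 := by simpa using htypes fun _ v => v
  have hSτ : ∑ i, ((Y1 i : ℝ) - Y0 i) = N10 - N01 := by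
    simpa [← sub_eq_add_neg] using htypes fun u v => u - v
  have hSτ2 : ∑ i, ((Y1 i : ℝ) - Y0 i) ^ 2 = N10 + N01 := by
    have h := htypes fun u v => ((u : ℝ) - v) ^ 2
    norm_num at h
    exact h
  have hN0 : (N : ℝ) ≠ 0 := Nat.cast_ne_zero.2 (by omega)
  rw [hstat, varE_diffInMeans (by omega) (by omega) (by omega),
    popVar_of_sq_eq_self fun i => natCast_sq_of_le_one (hY1 i),
    popVar_of_sq_eq_self fun i => natCast_sq_of_le_one (hY0 i), popVar]
  simp only [Fintype.card_fin, Pi.sub_apply, hS1, hS0, hSτ, hSτ2, hp1, hp0, hτ]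
  field_simp
  ring

/-- Without monotonicity, the variance of `τ̂(T) = n₁₁(T)/N₁ − n₀₁(T)/N₀` equals
`(N/(N−1)) { p₁(1−p₁)/N₁ + p₀(1−p₀)/N₀ − τ(1−τ)/N − 2N₀₁/N² }`. -/
theorem stmt_10 (N N₁ N₀ : ℕ) (hN : 2 ≤ N) (hN₁ : 1 ≤ N₁) (hN₁' : N₁ ≤ N - 1)
    (hN₀ : N₀ = N - N₁)
    (Y1 Y0 : Fin N → ℕ) (hY1 : ∀ i, Y1 i ≤ 1) (hY0 : ∀ i, Y0 i ≤ 1)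
    (N11 N10 N01 N00 : ℕ)
    (hN11 : N11 = (Finset.univ.filter (fun i => Y1 i = 1 ∧ Y0 i = 1)).card)
    (hN10 : N10 = (Finset.univ.filter (fun i => Y1 i = 1 ∧ Y0 i = 0)).card)
    (hN01 : N01 = (Finset.univ.filter (fun i => Y1 i = 0 ∧ Y0 i = 1)).card)
    (hN00 : N00 = (Finset.univ.filter (fun i => Y1 i = 0 ∧ Y0 i = 0)).card)
    (p1 p0 τ : ℝ) (hp1 : p1 = ((N11 : ℝ) + N10) / N) (hp0 : p0 = ((N11 : ℝ) + N01) / N)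
    (hτ : τ = ((N10 : ℝ) - N01) / N)
    (n11 n01 : Finset (Fin N) → ℕ)
    (hn11 : ∀ T, n11 T = (T.filter (fun i => Y1 i = 1)).card)
    (hn01 : ∀ T, n01 T = (Tᶜ.filter (fun i => Y0 i = 1)).card) :
    varE N N₁ (fun T => (n11 T : ℝ) / N₁ - (n01 T : ℝ) / N₀)
      = (N : ℝ) / (N - 1) *
        (p1 * (1 - p1) / N₁ + p0 * (1 - p0) / N₀ - τ * (1 - τ) / N
          - 2 * N01 / (N : ℝ) ^ 2) :=
  stmt_10_general N N₁ N₀ hN₁ hN₁' hN₀ Y1 Y0 hY1 hY0 N11 N10 N01 hN11 hN10 hN01 p1 p0 τ hp1 hp0 hτ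
    n11 n01 hn11 hn01
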